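/- arXiv:1602.05604 — 3 statements merged into one kernel-verified Lean document; each statement's English description precedes it below -/
import Mathlib

section
/- Let V_F > 0, a_m > 0, b > 0, c ≥ 0 and M* ≥ 0, and let μ ≥ max((c·M* + 2·V_F)/a_m, 1/b). Let N_E, N_I : [0,∞) → [0,∞) be locally integrable with ∫₀ᵗ N_I(s) ds ≤ M*·t for all t ≥ 0. Suppose M : [0,∞) → ℝ is locally absolutely continuous and satisfies, for almost every t ≥ 0, M'(t) ≥ μ·(b·N_E(t) − c·N_I(t) − V_F + μ·a_m)·M(t) − N_E(t)·e^{μ·V_F}, and that M(0) > e^{μ·V_F}/(μ·b). Then M(t) ≥ (M(0) − e^{μ·V_F}/(μ·b))·e^{μ·V_F·t} for all t ≥ 0; in particular M is unbounded on [0,∞), so M cannot satisfy M(t) ≤ e^{μ·V_F} for all t ≥ 0. -/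
open MeasureTheory Set intervalIntegral

lemma fubini_tri {f g : ℝ → ℝ} {t : ℝ}
    (hf : IntegrableOn f (Ioc 0 t)) (hg : IntegrableOn g (Ioc 0 t)) :
    ∫ s in Ioc 0 t, f s * (∫ u in Ioc s t, g u) =
      ∫ u in Ioc 0 t, (∫ s in Ioc 0 u, f s) * g u := by
  set μs := volume.restrict (Ioc (0:ℝ) t) with hμs
  have hswap : ∫ s, ∫ u, f s * ((Ioi s).indicator g u) ∂μs ∂μs
      = ∫ u, ∫ s, f s * ((Ioi s).indicator g u) ∂μs ∂μs := by
    apply integral_integral_swap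
    have h1 : Integrable (fun p : ℝ × ℝ => f p.1 * g p.2) (μs.prod μs) :=
      hf.mul_prod hg
    have h2 := h1.indicator (s := {p : ℝ × ℝ | p.1 < p.2})
      (measurableSet_lt measurable_fst measurable_snd)
    have : Function.uncurry (fun s u => f s * ((Ioi s).indicator g u))
        = {p : ℝ × ℝ | p.1 < p.2}.indicator (fun p => f p.1 * g p.2) := by
      funext p
      by_cases h : p.1 < p.2 <;>
        simp [Function.uncurry, Set.indicator_apply, Set.mem_Ioi, h]
    rw [this]
    exact h2
  have hL : ∫ s, ∫ u, f s * ((Ioi s).indicator g u) ∂μs ∂μs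
      = ∫ s in Ioc 0 t, f s * (∫ u in Ioc s t, g u) := by
    apply setIntegral_congr_fun measurableSet_Ioc
    intro s hs
    dsimp only
    have : ∫ u, (Ioi s).indicator g u ∂μs = ∫ u in Ioc s t, g u := by
      rw [MeasureTheory.integral_indicator measurableSet_Ioi, hμs,
        Measure.restrict_restrict measurableSet_Ioi]
      have hset : Ioi s ∩ Ioc 0 t = Ioc s t := by
        ext u
        simp only [mem_inter_iff, mem_Ioi, mem_Ioc]
        constructor
        · rintro ⟨h1, _, h3⟩; exact ⟨h1, h3⟩
        · rintro ⟨h1, h3⟩; exact ⟨h1, lt_trans hs.1 h1, h3⟩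
      rw [hset]
    rw [MeasureTheory.integral_const_mul, this]
  have hR : ∫ u, ∫ s, f s * ((Ioi s).indicator g u) ∂μs ∂μs
      = ∫ u in Ioc 0 t, (∫ s in Ioc 0 u, f s) * g u := by
    apply setIntegral_congr_fun measurableSet_Ioc
    intro u hu
    dsimp only
    have h1 : (fun s => f s * ((Ioi s).indicator g u))
        = (Iio u).indicator (fun s => f s * g u) := by
      funext s
      by_cases h : s < u <;>
        simp [Set.indicator_apply, Set.mem_Ioi, Set.mem_Iio, h, not_lt.mp]
    rw [h1, MeasureTheory.integral_indicator measurableSet_Iio, hμs,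
      Measure.restrict_restrict measurableSet_Iio]
    have h2 : Iio u ∩ Ioc 0 t = Ioo 0 u := by
      ext s
      simp only [mem_inter_iff, mem_Iio, mem_Ioc, mem_Ioo]
      constructor
      · rintro ⟨h1, h2, _⟩; exact ⟨h2, h1⟩
      · rintro ⟨h2, h1⟩; exact ⟨h1, h2, le_trans h1.le hu.2⟩
    rw [h2, MeasureTheory.integral_mul_const, ← integral_Ioc_eq_integral_Ioo]
  rw [← hL, hswap, hR]

lemma primitive_mul_primitive {f g : ℝ → ℝ} {t : ℝ} (ht : 0 ≤ t)
    (hf : IntervalIntegrable f volume 0 t) (hg : IntervalIntegrable g volume 0 t) :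
    (∫ s in (0:ℝ)..t, f s) * (∫ s in (0:ℝ)..t, g s)
      = (∫ s in (0:ℝ)..t, f s * (∫ u in (0:ℝ)..s, g u))
        + ∫ s in (0:ℝ)..t, (∫ u in (0:ℝ)..s, f u) * g s := by
  have huIcc : uIcc (0:ℝ) t = Icc 0 t := uIcc_of_le ht
  have hgI : IntegrableOn g (uIcc 0 t) := by
    rw [huIcc]; rw [intervalIntegrable_iff_integrableOn_Icc_of_le ht] at hg; exact hg
  have hfI : IntegrableOn f (uIcc 0 t) := by
    rw [huIcc]; rw [intervalIntegrable_iff_integrableOn_Icc_of_le ht] at hf; exact hf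
  have hcontG1 : ContinuousOn (fun s => ∫ u in (0:ℝ)..s, g u) (uIcc 0 t) :=
    continuousOn_primitive_interval' hg left_mem_uIcc
  have hcontG2 : ContinuousOn (fun s => ∫ u in s..t, g u) (uIcc 0 t) :=
    continuousOn_primitive_interval_left hgI
  have hint1 : IntervalIntegrable (fun s => f s * (∫ u in (0:ℝ)..s, g u)) volume 0 t :=
    hf.mul_continuousOn hcontG1
  have hint2 : IntervalIntegrable (fun s => f s * (∫ u in s..t, g u)) volume 0 t :=
    hf.mul_continuousOn hcontG2
  have key : ∫ s in (0:ℝ)..t, f s * (∫ s in (0:ℝ)..t, g s)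
      = (∫ s in (0:ℝ)..t, f s * (∫ u in (0:ℝ)..s, g u))
        + ∫ s in (0:ℝ)..t, f s * (∫ u in s..t, g u) := by
    rw [← intervalIntegral.integral_add hint1 hint2]
    apply intervalIntegral.integral_congr
    intro s hs
    rw [huIcc] at hs
    dsimp only
    rw [← mul_add, intervalIntegral.integral_add_adjacent_intervals
      (hg.mono_set (by rw [huIcc, uIcc_of_le hs.1]; exact Icc_subset_Icc le_rfl hs.2))
      (hg.mono_set (by rw [huIcc, uIcc_of_le hs.2]; exact Icc_subset_Icc hs.1 le_rfl))]
  have hfub : ∫ s in (0:ℝ)..t, f s * (∫ u in s..t, g u)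
      = ∫ s in (0:ℝ)..t, (∫ u in (0:ℝ)..s, f u) * g s := by
    rw [intervalIntegral.integral_of_le ht, intervalIntegral.integral_of_le ht]
    have e1 : ∫ s in Ioc 0 t, f s * (∫ u in s..t, g u)
        = ∫ s in Ioc 0 t, f s * (∫ u in Ioc s t, g u) := by
      apply setIntegral_congr_fun measurableSet_Ioc
      intro s hs; dsimp only
      rw [intervalIntegral.integral_of_le hs.2]
    have e2 : ∫ s in Ioc 0 t, (∫ u in (0:ℝ)..s, f u) * g s
        = ∫ s in Ioc 0 t, (∫ u in Ioc 0 s, f u) * g s := by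
      apply setIntegral_congr_fun measurableSet_Ioc
      intro s hs; dsimp only
      rw [intervalIntegral.integral_of_le hs.1.le]
    rw [e1, e2]
    exact fubini_tri (by rw [huIcc] at hfI; exact hfI.mono_set Ioc_subset_Icc_self)
      (by rw [huIcc] at hgI; exact hgI.mono_set Ioc_subset_Icc_self)
  rw [← intervalIntegral.integral_mul_const, key, hfub]

lemma ftc_mul {F G f g : ℝ → ℝ} {T : ℝ} (hT : 0 ≤ T)
    (hf : IntervalIntegrable f volume 0 T) (hg : IntervalIntegrable g volume 0 T)
    (hF : ∀ t ∈ Icc (0:ℝ) T, F t = F 0 + ∫ s in (0:ℝ)..t, f s)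
    (hG : ∀ t ∈ Icc (0:ℝ) T, G t = G 0 + ∫ s in (0:ℝ)..t, g s) :
    ∀ t ∈ Icc (0:ℝ) T, F t * G t = F 0 * G 0 + ∫ s in (0:ℝ)..t, (f s * G s + F s * g s) := by
  intro t htm
  obtain ⟨ht0, htT⟩ := htm
  have hsub : uIcc (0:ℝ) t ⊆ uIcc 0 T := by
    rw [uIcc_of_le ht0, uIcc_of_le hT]; exact Icc_subset_Icc le_rfl htT
  have hf' : IntervalIntegrable f volume 0 t := hf.mono_set hsub
  have hg' : IntervalIntegrable g volume 0 t := hg.mono_set hsub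
  have hcontF1 : ContinuousOn (fun s => ∫ u in (0:ℝ)..s, f u) (uIcc 0 t) :=
    continuousOn_primitive_interval' hf' left_mem_uIcc
  have hcontG1 : ContinuousOn (fun s => ∫ u in (0:ℝ)..s, g u) (uIcc 0 t) :=
    continuousOn_primitive_interval' hg' left_mem_uIcc
  have expand : ∫ s in (0:ℝ)..t, (f s * G s + F s * g s)
      = ∫ s in (0:ℝ)..t, (f s * G 0 + f s * (∫ u in (0:ℝ)..s, g u)
          + (F 0 * g s + (∫ u in (0:ℝ)..s, f u) * g s)) := by
    apply intervalIntegral.integral_congr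
    intro s hs
    have hs' : s ∈ Icc (0:ℝ) T := by
      rw [uIcc_of_le ht0] at hs; exact ⟨hs.1, le_trans hs.2 htT⟩
    dsimp only
    rw [hF s hs', hG s hs']; ring
  have ia : IntervalIntegrable (fun s => f s * G 0 + f s * (∫ u in (0:ℝ)..s, g u)) volume 0 t :=
    (hf'.mul_const _).add (hf'.mul_continuousOn hcontG1)
  have ib : IntervalIntegrable (fun s => F 0 * g s + (∫ u in (0:ℝ)..s, f u) * g s) volume 0 t :=
    (hg'.const_mul _).add (hg'.continuousOn_mul hcontF1)
  rw [expand, intervalIntegral.integral_add ia ib,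
    intervalIntegral.integral_add (hf'.mul_const _) (hf'.mul_continuousOn hcontG1),
    intervalIntegral.integral_add (hg'.const_mul _) (hg'.continuousOn_mul hcontF1),
    intervalIntegral.integral_mul_const, intervalIntegral.integral_const_mul,
    hF t ⟨ht0, htT⟩, hG t ⟨ht0, htT⟩]
  linear_combination primitive_mul_primitive ht0 hf' hg'

lemma primitive_pow {h : ℝ → ℝ} {T : ℝ} (hT : 0 ≤ T)
    (hh : IntervalIntegrable h volume 0 T) :
    ∀ n : ℕ,
      IntervalIntegrable (fun s => ((n:ℝ)+1) * (∫ u in (0:ℝ)..s, h u)^n * h s) volume 0 T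
      ∧ ∀ t ∈ Icc (0:ℝ) T, (∫ u in (0:ℝ)..t, h u)^(n+1)
          = ∫ s in (0:ℝ)..t, ((n:ℝ)+1) * (∫ u in (0:ℝ)..s, h u)^n * h s := by
  have contΦ : ContinuousOn (fun s => ∫ u in (0:ℝ)..s, h u) (uIcc 0 T) :=
    continuousOn_primitive_interval' hh left_mem_uIcc
  intro n
  induction n with
  | zero =>
    constructor
    · apply hh.congr
      intro s _
      simp
    · intro t ht
      simp only [pow_one, Nat.cast_zero, zero_add, pow_zero, mul_one, one_mul]
  | succ n ih =>
    obtain ⟨ihInt, ihEq⟩ := ih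
    have hint : IntervalIntegrable
        (fun s => ((n:ℝ)+1+1) * (∫ u in (0:ℝ)..s, h u)^(n+1) * h s) volume 0 T := by
      apply hh.continuousOn_mul
      exact continuousOn_const.mul (contΦ.pow (n+1))
    constructor
    · convert hint using 3
      push_cast; ring
    · intro t ht
      have key := ftc_mul hT ihInt hh
        (F := fun t => (∫ u in (0:ℝ)..t, h u)^(n+1))
        (G := fun t => ∫ u in (0:ℝ)..t, h u)
        (fun t ht => by
          simp only [intervalIntegral.integral_same, zero_pow (Nat.succ_ne_zero n), zero_add]
          exact ihEq t ht)
        (fun t ht => by simp) t ht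
      simp only [intervalIntegral.integral_same, zero_pow (Nat.succ_ne_zero n), zero_mul,
        zero_add] at key
      rw [← pow_succ] at key
      rw [key]
      apply intervalIntegral.integral_congr
      intro s hs
      dsimp only
      push_cast
      ring

lemma exp_primitive {h : ℝ → ℝ} {T : ℝ} (hT : 0 ≤ T)
    (hh : IntervalIntegrable h volume 0 T) :
    ∀ t ∈ Icc (0:ℝ) T, Real.exp (∫ u in (0:ℝ)..t, h u)
      = 1 + ∫ s in (0:ℝ)..t, h s * Real.exp (∫ u in (0:ℝ)..s, h u) := by
  set Φ : ℝ → ℝ := fun s => ∫ u in (0:ℝ)..s, h u with hΦ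
  have contΦ : ContinuousOn Φ (uIcc 0 T) :=
    continuousOn_primitive_interval' hh left_mem_uIcc
  obtain ⟨C, hC⟩ := isCompact_uIcc.exists_bound_of_continuousOn contΦ
  intro t ht
  have ht0 : (0:ℝ) ≤ t := ht.1
  have htmem : ∀ s ∈ Icc (0:ℝ) t, s ∈ Icc (0:ℝ) T := fun s hs => ⟨hs.1, hs.2.trans ht.2⟩
  have hIoct : ∀ s ∈ Ioc (0:ℝ) t, s ∈ uIcc (0:ℝ) T := by
    intro s hs
    rw [uIcc_of_le hT]
    exact ⟨hs.1.le, hs.2.trans ht.2⟩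
  -- integrability of Φ^n * h on [0,t]
  have hsub : uIcc (0:ℝ) t ⊆ uIcc 0 T := by
    rw [uIcc_of_le ht0, uIcc_of_le hT]; exact Icc_subset_Icc le_rfl ht.2
  have hPn : ∀ n : ℕ, IntegrableOn (fun s => Φ s ^ n * h s / n.factorial) (Ioc 0 t) := by
    intro n
    have : IntervalIntegrable (fun s => Φ s ^ n * h s / n.factorial) volume 0 t :=
      (((hh.continuousOn_mul (contΦ.pow n)).mono_set hsub).div_const _)
    rwa [intervalIntegrable_iff_integrableOn_Ioc_of_le ht0] at this
  have hhInt : IntegrableOn h (Ioc 0 t) := by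
    have := hh.mono_set hsub
    rwa [intervalIntegrable_iff_integrableOn_Ioc_of_le ht0] at this
  have hC0 : 0 ≤ C := le_trans (norm_nonneg (Φ 0)) (hC 0 left_mem_uIcc)
  -- the summable bound
  have hsummable : Summable fun n : ℕ =>
      ∫ s in Ioc (0:ℝ) t, ‖Φ s ^ n * h s / n.factorial‖ := by
    apply Summable.of_nonneg_of_le (fun n => integral_nonneg (fun s => norm_nonneg _))
      (fun n => ?_) (((Real.summable_pow_div_factorial C).mul_right
        (∫ s in Ioc (0:ℝ) t, ‖h s‖)))
    have hb : ∀ s ∈ Ioc (0:ℝ) t, ‖Φ s ^ n * h s / n.factorial‖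
        ≤ C ^ n / n.factorial * ‖h s‖ := by
      intro s hs
      have hΦs : ‖Φ s‖ ≤ C := hC s (hIoct s hs)
      have : ‖Φ s ^ n * h s / n.factorial‖ = ‖Φ s‖ ^ n * ‖h s‖ / n.factorial := by
        rw [norm_div, norm_mul, norm_pow]
        norm_num
      rw [this, div_mul_eq_mul_div, div_le_div_iff_of_pos_right (by positivity)]
      gcongr
    calc ∫ s in Ioc (0:ℝ) t, ‖Φ s ^ n * h s / n.factorial‖
        ≤ ∫ s in Ioc (0:ℝ) t, C ^ n / n.factorial * ‖h s‖ :=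
          setIntegral_mono_on (hPn n).norm ((hhInt.norm).const_mul _)
            measurableSet_Ioc hb
      _ = C ^ n / n.factorial * ∫ s in Ioc (0:ℝ) t, ‖h s‖ := integral_const_mul _ _
  -- swap
  have hswap : ∑' n : ℕ, ∫ s in Ioc (0:ℝ) t, Φ s ^ n * h s / n.factorial
      = ∫ s in Ioc (0:ℝ) t, ∑' n : ℕ, Φ s ^ n * h s / n.factorial :=
    integral_tsum_of_summable_integral_norm (fun n => hPn n) hsummable
  -- pointwise sum
  have hpt : ∀ s, ∑' n : ℕ, Φ s ^ n * h s / n.factorial = h s * Real.exp (Φ s) := by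
    intro s
    have : ∀ n : ℕ, Φ s ^ n * h s / n.factorial = (Φ s ^ n / n.factorial) * h s := by
      intro n; ring
    rw [tsum_congr this, tsum_mul_right, mul_comm]
    congr 1
    rw [Real.exp_eq_exp_ℝ, NormedSpace.exp_eq_tsum_div]
  -- the series for exp (Φ t)
  have hexp : Real.exp (Φ t) = ∑' n : ℕ, Φ t ^ n / n.factorial := by
    rw [Real.exp_eq_exp_ℝ, NormedSpace.exp_eq_tsum_div]
  rw [hexp, Summable.tsum_eq_zero_add (Real.summable_pow_div_factorial _)]
  simp only [pow_zero, Nat.factorial_zero, Nat.cast_one, div_one]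
  congr 1
  have hterm : ∀ n : ℕ, Φ t ^ (n+1) / (n+1).factorial
      = ∫ s in Ioc (0:ℝ) t, Φ s ^ n * h s / n.factorial := by
    intro n
    rw [(primitive_pow hT hh n).2 t ⟨ht.1, ht.2⟩, intervalIntegral.integral_of_le ht0,
      ← MeasureTheory.integral_div]
    apply setIntegral_congr_fun measurableSet_Ioc
    intro s hs
    dsimp only
    rw [Nat.factorial_succ]
    push_cast
    have h1 : ((n:ℝ) + 1) ≠ 0 := by positivity
    have h2 : (n.factorial : ℝ) ≠ 0 := Nat.cast_ne_zero.mpr n.factorial_ne_zero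
    field_simp
    ring
  rw [tsum_congr hterm, hswap, intervalIntegral.integral_of_le ht0]
  apply setIntegral_congr_fun measurableSet_Ioc
  intro s hs
  exact hpt s

lemma gronwall_lower {M M' g : ℝ → ℝ} {T : ℝ} (hT : 0 ≤ T)
    (hM' : IntervalIntegrable M' volume 0 T)
    (hg : IntervalIntegrable g volume 0 T)
    (hFTC : ∀ t ∈ Icc (0:ℝ) T, M t = M 0 + ∫ s in (0:ℝ)..t, M' s)
    (hae : ∀ᵐ s ∂volume, s ∈ Ioc (0:ℝ) T → g s * M s ≤ M' s) :
    M 0 * Real.exp (∫ s in (0:ℝ)..T, g s) ≤ M T := by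
  set E : ℝ → ℝ := fun t => Real.exp (∫ u in (0:ℝ)..t, -g u) with hE
  have hgneg : IntervalIntegrable (fun u => -g u) volume 0 T := hg.neg
  have contE : ContinuousOn E (uIcc 0 T) :=
    Real.continuous_exp.comp_continuousOn
      (continuousOn_primitive_interval' hgneg left_mem_uIcc)
  have hE0 : E 0 = 1 := by
    simp [hE]
  have hEftc : ∀ t ∈ Icc (0:ℝ) T, E t = E 0 + ∫ s in (0:ℝ)..t, (-g s) * E s := by
    intro t ht
    rw [hE0]
    exact exp_primitive hT hgneg t ht
  have hgE : IntervalIntegrable (fun s => (-g s) * E s) volume 0 T :=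
    hgneg.mul_continuousOn contE
  have key := ftc_mul hT hM' hgE hFTC hEftc T ⟨hT, le_rfl⟩
  rw [hE0, mul_one] at key
  have hnn : 0 ≤ ∫ s in (0:ℝ)..T, (M' s * E s + M s * ((-g s) * E s)) := by
    apply intervalIntegral.integral_nonneg_of_ae_restrict hT
    rw [Filter.EventuallyLE, ae_restrict_iff' measurableSet_Icc]
    have h0 : ({(0:ℝ)} : Set ℝ)ᶜ ∈ ae volume :=
      compl_mem_ae_iff.2 (measure_singleton 0)
    filter_upwards [hae, h0] with s hs hs0
    intro hsIcc
    have hsIoc : s ∈ Ioc (0:ℝ) T :=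
      ⟨lt_of_le_of_ne hsIcc.1 (Ne.symm hs0), hsIcc.2⟩
    have h1 := hs hsIoc
    have h2 : (0:ℝ) ≤ (M' s - g s * M s) * E s :=
      mul_nonneg (by linarith) (Real.exp_pos _).le
    have h3 : M' s * E s + M s * ((-g s) * E s) = (M' s - g s * M s) * E s := by ring
    simp only [Pi.zero_apply]
    rw [h3]
    exact h2
  have hMT : M 0 ≤ M T * E T := by
    rw [key]; linarith
  have hET : E T = Real.exp (-(∫ s in (0:ℝ)..T, g s)) := by
    rw [hE, ← intervalIntegral.integral_neg]
  calc M 0 * Real.exp (∫ s in (0:ℝ)..T, g s)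
      ≤ (M T * E T) * Real.exp (∫ s in (0:ℝ)..T, g s) :=
        mul_le_mul_of_nonneg_right hMT (Real.exp_nonneg _)
    _ = M T := by
        rw [hET, mul_assoc, ← Real.exp_add, neg_add_cancel, Real.exp_zero, mul_one]

/-- Core differential inequality underlying the finite-time blow-up theorem for the
excitatory–inhibitory NNLIF system.  `M` plays the role of the exponential moment of the
excitatory density; local absolute continuity is encoded via the fundamental theorem of
calculus with a locally integrable derivative `M'`. -/
theorem blowup_differential_inequality
    (VF am b c Mstar μ : ℝ)
    (hVF : 0 < VF) (ham : 0 < am) (hb : 0 < b) (hc : 0 ≤ c) (hMstar : 0 ≤ Mstar)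
    (hμ : max ((c * Mstar + 2 * VF) / am) (1 / b) ≤ μ)
    (NE NI : ℝ → ℝ)
    (hNEnn : ∀ t, 0 ≤ t → 0 ≤ NE t) (hNInn : ∀ t, 0 ≤ t → 0 ≤ NI t)
    (hNEloc : LocallyIntegrableOn NE (Set.Ici 0))
    (hNIloc : LocallyIntegrableOn NI (Set.Ici 0))
    (hNIbound : ∀ t, 0 ≤ t → (∫ s in (0:ℝ)..t, NI s) ≤ Mstar * t)
    (M M' : ℝ → ℝ)
    (hM'int : ∀ t, 0 ≤ t → IntervalIntegrable M' volume 0 t)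
    (hFTC : ∀ t, 0 ≤ t → M t = M 0 + ∫ s in (0:ℝ)..t, M' s)
    (hineq : ∀ᵐ t : ℝ ∂volume, 0 ≤ t →
      μ * (b * NE t - c * NI t - VF + μ * am) * M t - NE t * Real.exp (μ * VF) ≤ M' t)
    (hM0 : Real.exp (μ * VF) / (μ * b) < M 0) :
    (∀ t, 0 ≤ t →
      (M 0 - Real.exp (μ * VF) / (μ * b)) * Real.exp (μ * VF * t) ≤ M t) ∧
    ¬ (∀ t, 0 ≤ t → M t ≤ Real.exp (μ * VF)) := by
  have hμb' : 1 / b ≤ μ := le_trans (le_max_right _ _) hμ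
  have hμpos : 0 < μ := lt_of_lt_of_le (by positivity) hμb'
  have hμb : 1 ≤ μ * b := by
    rw [div_le_iff₀ hb] at hμb'; linarith
  have hμam : c * Mstar + 2 * VF ≤ μ * am := by
    have := le_trans (le_max_left _ _) hμ
    rwa [div_le_iff₀ ham] at this
  set α : ℝ := Real.exp (μ * VF) / (μ * b) with hα_def
  have hαpos : 0 < α := by
    apply div_pos (Real.exp_pos _)
    positivity
  have hM0α : α < M 0 := hM0
  have hM0pos : 0 < M 0 := lt_trans hαpos hM0α
  -- the comparison coefficient
  set g : ℝ → ℝ := fun s => μ * (μ * am - VF - c * NI s) with hg_def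
  have hNIint : ∀ T, 0 ≤ T → IntervalIntegrable NI volume 0 T := by
    intro T hT
    rw [intervalIntegrable_iff_integrableOn_Icc_of_le hT]
    exact hNIloc.integrableOn_compact_subset
      (fun x hx => hx.1) isCompact_Icc
  have hgint : ∀ T, 0 ≤ T → IntervalIntegrable g volume 0 T := by
    intro T hT
    have h1 : IntervalIntegrable (fun s => (μ * am - VF) - c * NI s) volume 0 T :=
      (_root_.intervalIntegrable_const).sub ((hNIint T hT).const_mul c)
    exact h1.const_mul μ
  have hglow : ∀ T, 0 ≤ T → μ * VF * T ≤ ∫ s in (0:ℝ)..T, g s := by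
    intro T hT
    have hsplit : ∫ s in (0:ℝ)..T, g s
        = μ * ((μ * am - VF) * T - c * ∫ s in (0:ℝ)..T, NI s) := by
      have e1 : ∫ s in (0:ℝ)..T, g s
          = μ * ∫ s in (0:ℝ)..T, ((μ * am - VF) - c * NI s) := by
        rw [← intervalIntegral.integral_const_mul]
      rw [e1, intervalIntegral.integral_sub _root_.intervalIntegrable_const
        ((hNIint T hT).const_mul c), intervalIntegral.integral_const,
        intervalIntegral.integral_const_mul]
      simp only [sub_zero, smul_eq_mul]
      ring
    rw [hsplit]
    have hNIb := hNIbound T hT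
    have h1 : c * ∫ s in (0:ℝ)..T, NI s ≤ c * (Mstar * T) :=
      mul_le_mul_of_nonneg_left hNIb hc
    have h2 : VF * T ≤ (μ * am - VF) * T - c * (Mstar * T) := by
      nlinarith
    nlinarith
  have hMcont : ∀ T, 0 ≤ T → ContinuousOn M (Set.Icc 0 T) := by
    intro T hT
    have h1 : ContinuousOn (fun t => M 0 + ∫ s in (0:ℝ)..t, M' s) (Set.Icc 0 T) := by
      apply continuousOn_const.add
      have := continuousOn_primitive_interval' (hM'int T hT) Set.left_mem_uIcc
      rwa [Set.uIcc_of_le hT] at this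
    exact h1.congr (fun t ht => hFTC t ht.1)
  -- the key Gronwall estimate, valid whenever M ≥ α on [0, T]
  have hkey : ∀ T, 0 ≤ T → (∀ s ∈ Set.Icc (0:ℝ) T, α ≤ M s) →
      M 0 * Real.exp (μ * VF * T) ≤ M T := by
    intro T hT hge
    have hae : ∀ᵐ s ∂volume, s ∈ Set.Ioc (0:ℝ) T → g s * M s ≤ M' s := by
      filter_upwards [hineq] with s hs hsIoc
      have h1 := hs hsIoc.1.le
      have h2 : α ≤ M s := hge s ⟨hsIoc.1.le, hsIoc.2⟩
      have h3 : 0 ≤ NE s := hNEnn s hsIoc.1.le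
      have hexpα : Real.exp (μ * VF) = (μ * b) * α := by
        rw [hα_def, mul_div_cancel₀]
        positivity
      have h4 : NE s * Real.exp (μ * VF) ≤ μ * b * NE s * M s := by
        rw [hexpα]
        have : NE s * (μ * b * α) = (μ * b * NE s) * α := by ring
        rw [this]
        exact mul_le_mul_of_nonneg_left h2 (by positivity)
      have hring : g s * M s
          = μ * (b * NE s - c * NI s - VF + μ * am) * M s - μ * b * NE s * M s := by
        rw [hg_def]; ring
      linarith
    have hgr := gronwall_lower hT (hM'int T hT) (hgint T hT)
      (fun t ht => hFTC t ht.1) hae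
    calc M 0 * Real.exp (μ * VF * T)
        ≤ M 0 * Real.exp (∫ s in (0:ℝ)..T, g s) := by
          apply mul_le_mul_of_nonneg_left _ hM0pos.le
          exact Real.exp_le_exp.mpr (hglow T hT)
      _ ≤ M T := hgr
  -- M never reaches α
  have hMα : ∀ t, 0 ≤ t → α < M t := by
    by_contra hcon
    push_neg at hcon
    obtain ⟨t₁, ht₁0, ht₁⟩ := hcon
    set B : Set ℝ := Set.Icc 0 t₁ ∩ M ⁻¹' (Set.Iic α) with hB_def
    have hBclosed : IsClosed B :=
      (hMcont t₁ ht₁0).preimage_isClosed_of_isClosed isClosed_Icc isClosed_Iic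
    have hBne : t₁ ∈ B := ⟨⟨ht₁0, le_rfl⟩, ht₁⟩
    have hBbdd : BddBelow B := ⟨0, fun x hx => hx.1.1⟩
    set t₀ : ℝ := sInf B with ht₀_def
    have ht₀B : t₀ ∈ B := hBclosed.csInf_mem ⟨t₁, hBne⟩ hBbdd
    have ht₀0 : 0 ≤ t₀ := ht₀B.1.1
    have hMt₀ : M t₀ ≤ α := ht₀B.2
    have ht₀pos : 0 < t₀ := by
      rcases lt_or_eq_of_le ht₀0 with h | h
      · exact h
      · exfalso
        rw [← h] at hMt₀
        linarith
    have hlt : ∀ s ∈ Set.Ico (0:ℝ) t₀, α < M s := by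
      intro s hs
      by_contra hle
      push_neg at hle
      have hsB : s ∈ B := ⟨⟨hs.1, le_trans hs.2.le ht₀B.1.2⟩, hle⟩
      exact absurd (csInf_le hBbdd hsB) (not_le.mpr hs.2)
    have hαt₀ : α ≤ M t₀ := by
      have hsub : Set.Ico (0:ℝ) t₀ ⊆ Set.Icc 0 t₁ := fun s hs =>
        ⟨hs.1, le_trans hs.2.le ht₀B.1.2⟩
      have hcw : ContinuousWithinAt M (Set.Ico 0 t₀) t₀ :=
        ((hMcont t₁ ht₁0) t₀ ht₀B.1).mono hsub
      have hclos : t₀ ∈ closure (Set.Ico (0:ℝ) t₀) := by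
        rw [closure_Ico (ne_of_lt ht₀pos)]
        exact ⟨ht₀0, le_rfl⟩
      have hne : (nhdsWithin t₀ (Set.Ico (0:ℝ) t₀)).NeBot :=
        mem_closure_iff_nhdsWithin_neBot.mp hclos
      exact ge_of_tendsto hcw
        (Filter.eventually_of_mem self_mem_nhdsWithin
          (fun s hs => (hlt s hs).le))
    have hall : ∀ s ∈ Set.Icc (0:ℝ) t₀, α ≤ M s := by
      intro s hs
      rcases lt_or_eq_of_le hs.2 with h | h
      · exact (hlt s ⟨hs.1, h⟩).le
      · rw [h]; exact hαt₀
    have h1 := hkey t₀ ht₀0 hall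
    have h2 : (1:ℝ) ≤ Real.exp (μ * VF * t₀) := Real.one_le_exp (by positivity)
    nlinarith
  constructor
  · intro t ht
    have hall : ∀ s ∈ Set.Icc (0:ℝ) t, α ≤ M s := fun s hs => (hMα s hs.1).le
    have h1 := hkey t ht hall
    have h2 : (M 0 - α) * Real.exp (μ * VF * t) ≤ M 0 * Real.exp (μ * VF * t) :=
      mul_le_mul_of_nonneg_right (by linarith) (Real.exp_nonneg _)
    linarith
  · intro hbound
    set β : ℝ := M 0 - α with hβ_def
    have hβpos : 0 < β := by rw [hβ_def]; linarith
    set Q : ℝ := Real.exp (μ * VF) / β with hQ_def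
    have hQpos : 0 < Q := div_pos (Real.exp_pos _) hβpos
    set t : ℝ := max 0 ((Real.log Q + 1) / (μ * VF)) with ht_def
    have ht0 : 0 ≤ t := le_max_left _ _
    have hμVF : 0 < μ * VF := by positivity
    have hmul : Real.log Q + 1 ≤ μ * VF * t := by
      have h1 : (Real.log Q + 1) / (μ * VF) ≤ t := le_max_right _ _
      rwa [div_le_iff₀ hμVF, mul_comm t (μ * VF)] at h1
    have hexpt : Q < Real.exp (μ * VF * t) := by
      calc Q = Real.exp (Real.log Q) := (Real.exp_log hQpos).symm
        _ < Real.exp (Real.log Q + 1) := by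
            apply Real.exp_lt_exp.mpr; linarith
        _ ≤ Real.exp (μ * VF * t) := Real.exp_le_exp.mpr hmul
    have hfinal : Real.exp (μ * VF) < β * Real.exp (μ * VF * t) := by
      have := mul_lt_mul_of_pos_left hexpt hβpos
      rw [hQ_def] at this
      rw [mul_div_cancel₀ _ (ne_of_gt hβpos)] at this
      exact this
    have hall : ∀ s ∈ Set.Icc (0:ℝ) t, α ≤ M s := fun s hs => (hMα s hs.1).le
    have h1 := hkey t ht0 hall
    have h2 := hbound t ht0
    have h3 : (M 0 - α) * Real.exp (μ * VF * t) ≤ M 0 * Real.exp (μ * VF * t) :=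
      mul_le_mul_of_nonneg_right (by linarith) (Real.exp_nonneg _)
    rw [hβ_def] at hfinal
    linarith
end

section
/- For all real numbers α < β, ∫_{−∞}^{β} e^{−z²/2} · ( ∫_{max(z,α)}^{β} e^{u²/2} du ) dz = ∫₀^{∞} (e^{−s²/2}/s)·(e^{s·β} − e^{s·α}) ds, and in particular both integrals are finite. -/
open MeasureTheory Set
open scoped ENNReal

private lemma lint_shift (u : ℝ) (G : ℝ → ℝ≥0∞) :
    ∫⁻ z in Set.Iio u, G z = ∫⁻ s in Set.Ioi (0:ℝ), G (u - s) := by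
  have h := (Measure.measurePreserving_sub_left volume u).setLIntegral_comp_emb
    (MeasurableEquiv.subLeft u).measurableEmbedding G (Set.Ioi 0)
  have himg : (fun x : ℝ => u - x) '' Set.Ioi 0 = Set.Iio u := by
    rw [Set.image_const_sub_Ioi, sub_zero]
  rw [← himg]
  exact h.symm

/-- Change-of-variables identity converting the double-integral form of the stationary
firing-rate functionals of the NNLIF system into a single-integral form; in particular
both integrals are finite. -/
theorem double_integral_change_of_variables (α β : ℝ) (h : α < β) :
    IntegrableOn
      (fun z => Real.exp (-z ^ 2 / 2) * ∫ u in Set.Ioc (max z α) β, Real.exp (u ^ 2 / 2))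
      (Set.Iio β) ∧
    IntegrableOn
      (fun s => Real.exp (-s ^ 2 / 2) / s * (Real.exp (s * β) - Real.exp (s * α)))
      (Set.Ioi 0) ∧
    (∫ z in Set.Iio β,
        Real.exp (-z ^ 2 / 2) * ∫ u in Set.Ioc (max z α) β, Real.exp (u ^ 2 / 2))
      = ∫ s in Set.Ioi (0:ℝ),
          Real.exp (-s ^ 2 / 2) / s * (Real.exp (s * β) - Real.exp (s * α)) := by
  set f : ℝ → ℝ := fun z =>
    Real.exp (-z ^ 2 / 2) * ∫ u in Set.Ioc (max z α) β, Real.exp (u ^ 2 / 2) with hf_def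
  set g : ℝ → ℝ := fun s =>
    Real.exp (-s ^ 2 / 2) / s * (Real.exp (s * β) - Real.exp (s * α)) with hg_def
  have hexp_cont : Continuous fun u : ℝ => Real.exp (u ^ 2 / 2) :=
    Real.continuous_exp.comp (by fun_prop)
  have hIoc_int : ∀ a : ℝ, IntegrableOn (fun u => Real.exp (u ^ 2 / 2)) (Set.Ioc a β) :=
    fun a => hexp_cont.integrableOn_Ioc
  -- continuity of f
  have hK : Continuous fun x : ℝ => ∫ t in x..β, Real.exp (t ^ 2 / 2) := by
    have h1 : Continuous fun x : ℝ => ∫ t in β..x, Real.exp (t ^ 2 / 2) :=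
      intervalIntegral.continuous_primitive (fun a b => (hexp_cont.intervalIntegrable a b)) β
    have : (fun x : ℝ => ∫ t in x..β, Real.exp (t ^ 2 / 2)) =
        fun x => -∫ t in β..x, Real.exp (t ^ 2 / 2) := by
      funext x; rw [intervalIntegral.integral_symm]
    rw [this]; exact h1.neg
  have hf_eq : ∀ z : ℝ, f z =
      Real.exp (-z ^ 2 / 2) * ∫ t in (min (max z α) β)..β, Real.exp (t ^ 2 / 2) := by
    intro z
    rcases le_or_gt (max z α) β with hzb | hzb
    · rw [hf_def]
      simp only [min_eq_left hzb]
      rw [intervalIntegral.integral_of_le hzb]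
    · have : Set.Ioc (max z α) β = ∅ := Set.Ioc_eq_empty (not_lt.mpr hzb.le)
      rw [hf_def]; simp only [this, Measure.restrict_empty, integral_zero_measure,
        min_eq_right hzb.le, intervalIntegral.integral_same]
  have hf_cont : Continuous f := by
    have : f = fun z => Real.exp (-z ^ 2 / 2) *
        (fun x : ℝ => ∫ t in x..β, Real.exp (t ^ 2 / 2)) (min (max z α) β) := by
      funext z; exact hf_eq z
    rw [this]
    exact (Real.continuous_exp.comp (by fun_prop)).mul
      (hK.comp (((continuous_id.max continuous_const).min continuous_const)))
  have hf_nonneg : ∀ z : ℝ, 0 ≤ f z := fun z =>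
    mul_nonneg (Real.exp_pos _).le
      (setIntegral_nonneg measurableSet_Ioc fun u _ => (Real.exp_pos _).le)
  -- nonnegativity and bound for g
  have hg_nonneg : ∀ s ∈ Set.Ioi (0:ℝ), 0 ≤ g s := by
    intro s hs
    have hs' : (0:ℝ) < s := hs
    apply mul_nonneg (div_nonneg (Real.exp_pos _).le hs'.le)
    have : s * α ≤ s * β := by nlinarith
    linarith [Real.exp_le_exp.mpr this]
  have hg_bound : ∀ s ∈ Set.Ioi (0:ℝ),
      g s ≤ (β - α) * Real.exp (β ^ 2 / 2) * Real.exp (-(s - β) ^ 2 / 2) := by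
    intro s hs
    have hs' : (0:ℝ) < s := hs
    have h1 : Real.exp (s * β) - Real.exp (s * α) ≤ s * (β - α) * Real.exp (s * β) := by
      have := Real.add_one_le_exp (s * α - s * β)
      have h2 : (s * α - s * β + 1) * Real.exp (s * β) ≤
          Real.exp (s * α - s * β) * Real.exp (s * β) := by
        apply mul_le_mul_of_nonneg_right this (Real.exp_pos _).le
      rw [← Real.exp_add] at h2
      have h3 : s * α - s * β + (s * β) = s * α := by ring
      rw [h3] at h2
      nlinarith
    have h4 : Real.exp (-s ^ 2 / 2) * Real.exp (s * β) =
        Real.exp (β ^ 2 / 2) * Real.exp (-(s - β) ^ 2 / 2) := by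
      rw [← Real.exp_add, ← Real.exp_add]; congr 1; ring
    have h5 : g s ≤ Real.exp (-s ^ 2 / 2) / s * (s * (β - α) * Real.exp (s * β)) := by
      apply mul_le_mul_of_nonneg_left h1 (div_nonneg (Real.exp_pos _).le hs'.le)
    calc g s ≤ Real.exp (-s ^ 2 / 2) / s * (s * (β - α) * Real.exp (s * β)) := h5
      _ = (β - α) * (Real.exp (-s ^ 2 / 2) * Real.exp (s * β)) := by field_simp
      _ = (β - α) * Real.exp (β ^ 2 / 2) * Real.exp (-(s - β) ^ 2 / 2) := by rw [h4]; ring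
  have hg_meas : AEStronglyMeasurable g (volume.restrict (Set.Ioi 0)) := by
    have : ContinuousOn g (Set.Ioi 0) := by
      apply ContinuousOn.mul
      · exact ContinuousOn.div (Real.continuous_exp.comp (by fun_prop)).continuousOn
          continuousOn_id (fun s hs => ne_of_gt hs)
      · exact ((Real.continuous_exp.comp (by fun_prop)).sub
          (Real.continuous_exp.comp (by fun_prop))).continuousOn
    exact this.aestronglyMeasurable measurableSet_Ioi
  have hmaj : Integrable (fun s : ℝ => (β - α) * Real.exp (β ^ 2 / 2) *
      Real.exp (-(s - β) ^ 2 / 2)) := by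
    have h0 : Integrable (fun s : ℝ => Real.exp (-(s - β) ^ 2 / 2)) := by
      have := (integrable_exp_neg_mul_sq (b := (1:ℝ)/2) (by norm_num)).comp_sub_right β
      convert this using 2 with x; ring_nf
    exact h0.const_mul _
  have hg_int : IntegrableOn g (Set.Ioi 0) := by
    apply Integrable.mono' hmaj.integrableOn hg_meas
    rw [ae_restrict_iff' measurableSet_Ioi]
    filter_upwards with s hs
    rw [Real.norm_eq_abs, abs_of_nonneg (hg_nonneg s hs)]
    exact hg_bound s hs
  -- Lebesgue integral machinery
  set E : ℝ → ℝ≥0∞ := fun x => ENNReal.ofReal (Real.exp x) with hE_def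
  have hE_meas : ∀ {φ : ℝ → ℝ}, Measurable φ → Measurable fun x => E (φ x) := by
    intro φ hφ
    exact ENNReal.measurable_ofReal.comp (Real.measurable_exp.comp hφ)
  -- Step 1: ofReal (f z) as lintegral
  have step1 : ∀ z : ℝ, ENNReal.ofReal (f z) =
      ∫⁻ u in Set.Ioc (max z α) β, E (u ^ 2 / 2 - z ^ 2 / 2) := by
    intro z
    have h1 : f z = ∫ u in Set.Ioc (max z α) β, Real.exp (u ^ 2 / 2 - z ^ 2 / 2) := by
      rw [hf_def]
      simp only
      rw [← integral_const_mul]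
      congr 1; funext u
      rw [← Real.exp_add]; congr 1; ring
    rw [h1, ofReal_integral_eq_lintegral_ofReal]
    · exact (Real.continuous_exp.comp (by fun_prop)).integrableOn_Ioc
    · exact Filter.Eventually.of_forall fun u => (Real.exp_pos _).le
  -- the common kernel on the product space
  set S : Set (ℝ × ℝ) := {p | p.1 < p.2 ∧ α < p.2 ∧ p.2 ≤ β} with hS_def
  have hS_meas : MeasurableSet S := by
    apply MeasurableSet.inter (measurableSet_lt measurable_fst measurable_snd)
    exact MeasurableSet.inter (measurableSet_lt measurable_const measurable_snd)
      (measurableSet_le measurable_snd measurable_const)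
  set F : ℝ × ℝ → ℝ≥0∞ := fun p => S.indicator (fun p => E (p.2 ^ 2 / 2 - p.1 ^ 2 / 2)) p
    with hF_def
  have hF_meas : Measurable F := by
    apply Measurable.indicator _ hS_meas
    have hm : Measurable fun p : ℝ × ℝ => p.2 ^ 2 / 2 - p.1 ^ 2 / 2 := by fun_prop
    exact ENNReal.measurable_ofReal.comp (Real.measurable_exp.comp hm)
  have hmem : ∀ z u : ℝ, u ∈ Set.Ioc (max z α) β ↔ (z, u) ∈ S := by
    intro z u
    simp only [Set.mem_Ioc, max_lt_iff, hS_def, Set.mem_setOf_eq]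
    tauto
  -- Step 2: LHS lintegral equals double lintegral of F
  have step2 : ∫⁻ z in Set.Iio β, ENNReal.ofReal (f z) = ∫⁻ z, ∫⁻ u, F (z, u) := by
    have hinner : ∀ z : ℝ, ENNReal.ofReal (f z) = ∫⁻ u, F (z, u) := by
      intro z
      rw [step1 z]
      have : Set.Ioc (max z α) β = {u : ℝ | (z, u) ∈ S} := by
        ext u; exact hmem z u
      rw [← lintegral_indicator (by rw [this]; exact measurable_prodMk_left hS_meas)]
      congr 1; funext u
      show _ = S.indicator (fun p => E (p.2 ^ 2 / 2 - p.1 ^ 2 / 2)) (z, u)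
      by_cases hu : u ∈ Set.Ioc (max z α) β
      · rw [Set.indicator_of_mem hu, Set.indicator_of_mem ((hmem z u).mp hu)]
      · rw [Set.indicator_of_notMem hu, Set.indicator_of_notMem
          (fun hc => hu ((hmem z u).mpr hc))]
    have hzero : ∀ z : ℝ, z ∉ Set.Iio β → (∫⁻ u, F (z, u)) = 0 := by
      intro z hz
      have : ∀ u : ℝ, F (z, u) = 0 := by
        intro u
        apply Set.indicator_of_notMem
        rintro ⟨h1, _, h3⟩
        exact hz (lt_of_lt_of_le h1 h3)
      simp only [this, lintegral_zero]
    calc ∫⁻ z in Set.Iio β, ENNReal.ofReal (f z)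
        = ∫⁻ z in Set.Iio β, ∫⁻ u, F (z, u) := by
          apply lintegral_congr; intro z; exact hinner z
      _ = ∫⁻ z, (Set.Iio β).indicator (fun z => ∫⁻ u, F (z, u)) z :=
          (lintegral_indicator measurableSet_Iio _).symm
      _ = ∫⁻ z, ∫⁻ u, F (z, u) := by
          congr 1; funext z
          by_cases hz : z ∈ Set.Iio β
          · rw [Set.indicator_of_mem hz]
          · rw [Set.indicator_of_notMem hz, hzero z hz]
  -- Step 3: Tonelli swap
  have step3 : ∫⁻ z, ∫⁻ u, F (z, u) = ∫⁻ u, ∫⁻ z, F (z, u) :=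
    lintegral_lintegral_swap hF_meas.aemeasurable
  -- Step 4: reduce to iterated integral over Ioc α β, Iio u
  have step4 : ∫⁻ u, ∫⁻ z, F (z, u) =
      ∫⁻ u in Set.Ioc α β, ∫⁻ z in Set.Iio u, E (u ^ 2 / 2 - z ^ 2 / 2) := by
    rw [← lintegral_indicator measurableSet_Ioc]
    congr 1; funext u
    by_cases hu : u ∈ Set.Ioc α β
    · rw [Set.indicator_of_mem hu]
      have : ∀ z : ℝ, F (z, u) = (Set.Iio u).indicator
          (fun z => E (u ^ 2 / 2 - z ^ 2 / 2)) z := by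
        intro z
        show S.indicator (fun p => E (p.2 ^ 2 / 2 - p.1 ^ 2 / 2)) (z, u) = _
        by_cases hz : z < u
        · rw [Set.indicator_of_mem (show (z,u) ∈ S from ⟨hz, hu.1, hu.2⟩),
            Set.indicator_of_mem (show z ∈ Set.Iio u from hz)]
        · rw [Set.indicator_of_notMem (show (z,u) ∉ S from fun hc => hz hc.1),
            Set.indicator_of_notMem (show z ∉ Set.Iio u from hz)]
      simp only [this]
      exact lintegral_indicator measurableSet_Iio _
    · have : ∀ z : ℝ, F (z, u) = 0 := by
        intro z
        apply Set.indicator_of_notMem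
        rintro ⟨_, h2, h3⟩
        exact hu ⟨h2, h3⟩
      simp only [this, lintegral_zero]
      rw [Set.indicator_of_notMem hu]
  -- Step 5: shift substitution in inner integral
  have step5 : ∀ u : ℝ, (∫⁻ z in Set.Iio u, E (u ^ 2 / 2 - z ^ 2 / 2)) =
      ∫⁻ s in Set.Ioi (0:ℝ), E (s * u - s ^ 2 / 2) := by
    intro u
    rw [lint_shift u (fun z => E (u ^ 2 / 2 - z ^ 2 / 2))]
    apply lintegral_congr
    intro s
    congr 1; ring
  -- Step 6: swap again
  have step6 : (∫⁻ u in Set.Ioc α β, ∫⁻ s in Set.Ioi (0:ℝ), E (s * u - s ^ 2 / 2)) =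
      ∫⁻ s in Set.Ioi (0:ℝ), ∫⁻ u in Set.Ioc α β, E (s * u - s ^ 2 / 2) := by
    apply lintegral_lintegral_swap
    have hm : Measurable fun p : ℝ × ℝ => p.2 * p.1 - p.2 ^ 2 / 2 := by fun_prop
    exact (ENNReal.measurable_ofReal.comp (Real.measurable_exp.comp hm)).aemeasurable
  -- Step 7: inner integral over u computes to ofReal (g s)
  have step7 : ∀ s ∈ Set.Ioi (0:ℝ),
      (∫⁻ u in Set.Ioc α β, E (s * u - s ^ 2 / 2)) = ENNReal.ofReal (g s) := by
    intro s hs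
    have hs' : (0:ℝ) < s := hs
    have h1 : (∫⁻ u in Set.Ioc α β, E (s * u - s ^ 2 / 2)) =
        ENNReal.ofReal (∫ u in Set.Ioc α β, Real.exp (s * u - s ^ 2 / 2)) := by
      rw [ofReal_integral_eq_lintegral_ofReal]
      · exact (Real.continuous_exp.comp (by fun_prop)).integrableOn_Ioc
      · exact Filter.Eventually.of_forall fun u => (Real.exp_pos _).le
    rw [h1]
    congr 1
    have h2 : ∀ u : ℝ, Real.exp (s * u - s ^ 2 / 2) =
        Real.exp (-s ^ 2 / 2) * Real.exp (s * u) := by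
      intro u; rw [← Real.exp_add]; congr 1; ring
    simp only [h2]
    rw [integral_const_mul]
    have h3 : (∫ u in Set.Ioc α β, Real.exp (s * u)) =
        (Real.exp (s * β) - Real.exp (s * α)) / s := by
      rw [← intervalIntegral.integral_of_le h.le,
        intervalIntegral.integral_comp_mul_left Real.exp hs'.ne', integral_exp]
      rw [smul_eq_mul]; field_simp
    rw [h3, hg_def]
    field_simp
  -- Step 8: final lintegral identity
  have step8 : (∫⁻ s in Set.Ioi (0:ℝ), ∫⁻ u in Set.Ioc α β, E (s * u - s ^ 2 / 2)) =
      ENNReal.ofReal (∫ s in Set.Ioi (0:ℝ), g s) := by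
    rw [setLIntegral_congr_fun measurableSet_Ioi step7]
    rw [ofReal_integral_eq_lintegral_ofReal hg_int]
    filter_upwards [ae_restrict_mem measurableSet_Ioi] with s hs using hg_nonneg s hs
  have key : (∫⁻ z in Set.Iio β, ENNReal.ofReal (f z)) =
      ENNReal.ofReal (∫ s in Set.Ioi (0:ℝ), g s) := by
    rw [step2, step3, step4]
    rw [show (∫⁻ u in Set.Ioc α β, ∫⁻ z in Set.Iio u, E (u ^ 2 / 2 - z ^ 2 / 2)) =
        ∫⁻ u in Set.Ioc α β, ∫⁻ s in Set.Ioi (0:ℝ), E (s * u - s ^ 2 / 2) from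
      lintegral_congr fun u => step5 u]
    rw [step6, step8]
  -- integrability of f on Iio β
  have hf_int : IntegrableOn f (Set.Iio β) := by
    constructor
    · exact hf_cont.aestronglyMeasurable.restrict
    · rw [hasFiniteIntegral_iff_ofReal (Filter.Eventually.of_forall fun z => hf_nonneg z)]
      rw [key]
      exact ENNReal.ofReal_lt_top
  refine ⟨hf_int, hg_int, ?_⟩
  have h1 : ENNReal.ofReal (∫ z in Set.Iio β, f z) =
      ENNReal.ofReal (∫ s in Set.Ioi (0:ℝ), g s) := by
    rw [ofReal_integral_eq_lintegral_ofReal hf_int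
      (Filter.Eventually.of_forall fun z => hf_nonneg z)]
    exact key
  have h2 : 0 ≤ ∫ z in Set.Iio β, f z :=
    setIntegral_nonneg measurableSet_Iio fun z _ => hf_nonneg z
  have h3 : 0 ≤ ∫ s in Set.Ioi (0:ℝ), g s := by
    apply setIntegral_nonneg measurableSet_Ioi
    intro s hs; exact hg_nonneg s hs
  exact (ENNReal.ofReal_eq_ofReal_iff h2 h3).mp h1
end

section
/- The functions I1 and I2 are C^∞ (infinitely differentiable) functions of (N_E, N_I) ∈ ℝ². -/
open MeasureTheory

/-- The stationary firing-rate functional `I1` of the excitatory population. -/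
noncomputable def I1 (VR VF aE bEE bIE : ℝ) (NE NI : ℝ) : ℝ :=
  ∫ s in Set.Ioi (0:ℝ),
    Real.exp (-s ^ 2 / 2) / s *
      (Real.exp (s * ((VF - (bEE * NE - bIE * NI)) / Real.sqrt aE)) -
       Real.exp (s * ((VR - (bEE * NE - bIE * NI)) / Real.sqrt aE)))

/-- The stationary firing-rate functional `I2` of the inhibitory population. -/
noncomputable def I2 (VR VF aI bEE bEI bII νext : ℝ) (NE NI : ℝ) : ℝ :=
  ∫ s in Set.Ioi (0:ℝ),
    Real.exp (-s ^ 2 / 2) / s *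
      (Real.exp (s * ((VF - (bEI * NE - bII * NI + (bEI - bEE) * νext)) / Real.sqrt aI)) -
       Real.exp (s * ((VR - (bEI * NE - bII * NI + (bEI - bEE) * νext)) / Real.sqrt aI)))


namespace SmoothAux

open Set
set_option maxHeartbeats 1000000

lemma contDiff_gauss_aux : ContDiff ℝ (⊤ : ℕ∞) fun x : ℝ => Real.exp (-x ^ 2 / 2) :=
  Real.contDiff_exp.comp (((contDiff_id.pow 2).neg).div_const 2)


/-- The Gaussian density (un-normalised). -/
noncomputable def gauss (x : ℝ) : ℝ := Real.exp (-x ^ 2 / 2)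

lemma continuous_gauss : Continuous gauss := contDiff_gauss_aux.continuous

lemma integrable_gauss : Integrable gauss := by
  have h := integrable_exp_neg_mul_sq (show (0:ℝ) < 1/2 by norm_num)
  have : gauss = fun x : ℝ => Real.exp (-(1/2) * x ^ 2) := by
    funext x; unfold gauss; ring_nf
  rw [this]; exact h

/-- Antiderivative of the Gaussian starting at `0`. -/
noncomputable def gaussE (t : ℝ) : ℝ := ∫ x in (0:ℝ)..t, gauss x

/-- The half-line Gaussian integral as a constant. -/
noncomputable def gaussC : ℝ := ∫ x in Ioi (0:ℝ), gauss x

lemma hasDerivAt_gaussE (t : ℝ) : HasDerivAt gaussE (gauss t) t :=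
  (continuous_gauss.integral_hasStrictDerivAt 0 t).hasDerivAt

lemma contDiff_gaussE : ContDiff ℝ (⊤ : ℕ∞) gaussE := by
  rw [show ((⊤ : ℕ∞) : WithTop ℕ∞) = (⊤ : ℕ∞) from rfl, contDiff_infty_iff_deriv]
  constructor
  · exact fun t => (hasDerivAt_gaussE t).differentiableAt
  · have : deriv gaussE = gauss := funext fun t => (hasDerivAt_gaussE t).deriv
    rw [this]; exact contDiff_gauss_aux

/-- The function `t ↦ ∫_{0}^{∞} e^{-s²/2 + st} ds`, in closed form. -/
noncomputable def phi (t : ℝ) : ℝ := Real.exp (t ^ 2 / 2) * (gaussC + gaussE t)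

lemma contDiff_phi : ContDiff ℝ (⊤ : ℕ∞) phi := by
  have h1 : ContDiff ℝ (⊤ : ℕ∞) fun t : ℝ => Real.exp (t ^ 2 / 2) :=
    Real.contDiff_exp.comp ((contDiff_id.pow 2).div_const 2)
  exact h1.mul (contDiff_const.add contDiff_gaussE)

lemma continuous_phi : Continuous phi := contDiff_phi.continuous

/-- Splitting of the Gaussian integral over a half line. -/
lemma integral_gauss_Ioi (a : ℝ) :
    ∫ x in Ioi a, gauss x = (∫ x in a..(0:ℝ), gauss x) + gaussC := by
  rcases le_total a 0 with ha | ha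
  · rw [← Set.Ioc_union_Ioi_eq_Ioi ha,
      setIntegral_union (Set.Ioc_disjoint_Ioi le_rfl) measurableSet_Ioi
        integrable_gauss.integrableOn integrable_gauss.integrableOn,
      intervalIntegral.integral_of_le ha]
    rfl
  · have h := setIntegral_union (Set.Ioc_disjoint_Ioi (le_refl a)) measurableSet_Ioi
      (integrable_gauss.integrableOn (s := Ioc 0 a))
      (integrable_gauss.integrableOn (s := Ioi a))
    rw [Set.Ioc_union_Ioi_eq_Ioi ha] at h
    have h2 : (∫ x in a..(0:ℝ), gauss x) = -∫ x in Ioc 0 a, gauss x := by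
      rw [← intervalIntegral.integral_of_le ha, intervalIntegral.integral_symm]
    rw [h2]
    unfold gaussC
    rw [h]; ring

lemma gaussE_neg (t : ℝ) : (∫ x in (-t)..(0:ℝ), gauss x) = gaussE t := by
  unfold gaussE
  have : (∫ x in (0:ℝ)..t, gauss x) = ∫ x in (0:ℝ)..t, gauss (-x) := by
    apply intervalIntegral.integral_congr
    intro x _; unfold gauss; ring_nf
  rw [this, intervalIntegral.integral_comp_neg, neg_zero]

lemma phi_eq (t : ℝ) :
    ∫ s in Ioi (0:ℝ), Real.exp (-s ^ 2 / 2 + s * t) = phi t := by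
  have h1 : ∀ s : ℝ, Real.exp (-s ^ 2 / 2 + s * t)
      = Real.exp (t ^ 2 / 2) * gauss (s - t) := by
    intro s; unfold gauss; rw [← Real.exp_add]; ring_nf
  simp_rw [h1]
  rw [integral_const_mul]
  have hmp := measurePreserving_sub_right (volume : Measure ℝ) t
  have hemb : MeasurableEmbedding (fun x : ℝ => x - t) :=
    (MeasurableEquiv.subRight t).measurableEmbedding
  have hpre : (fun x : ℝ => x - t) ⁻¹' Ioi (-t) = Ioi (0:ℝ) := by
    ext x
    simp only [Set.mem_preimage, Set.mem_Ioi]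
    constructor <;> intro h <;> linarith
  have h2 : ∫ s in Ioi (0:ℝ), gauss (s - t) = ∫ x in Ioi (-t), gauss x := by
    rw [← hpre]
    exact hmp.setIntegral_preimage_emb hemb gauss (Ioi (-t))
  rw [h2, integral_gauss_Ioi, gaussE_neg]
  unfold phi; ring

lemma integrable_shift (c : ℝ) :
    IntegrableOn (fun s : ℝ => Real.exp (-s ^ 2 / 2 + s * c)) (Ioi 0) := by
  have h : (fun s : ℝ => Real.exp (-s ^ 2 / 2 + s * c))
      = fun s : ℝ => Real.exp (c ^ 2 / 2) * gauss (s - c) := by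
    funext s; unfold gauss; rw [← Real.exp_add]; ring_nf
  rw [h]
  exact ((integrable_gauss.comp_sub_right c).const_mul _).integrableOn

lemma abs_exp_sub_exp (x y : ℝ) :
    |Real.exp x - Real.exp y| ≤ |x - y| * Real.exp (max x y) := by
  have key : ∀ a b : ℝ, b ≤ a → Real.exp a - Real.exp b ≤ (a - b) * Real.exp a := by
    intro a b hba
    have h := Real.add_one_le_exp (b - a)
    have hea := Real.exp_pos a
    have : Real.exp b = Real.exp (b - a) * Real.exp a := by
      rw [← Real.exp_add]; ring_nf
    nlinarith
  rcases le_total y x with h | h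
  · rw [abs_of_nonneg (by simpa using Real.exp_le_exp.2 h : (0:ℝ) ≤ _),
      abs_of_nonneg (by linarith), max_eq_left h]
    exact key x y h
  · rw [abs_sub_comm, abs_sub_comm x y,
      abs_of_nonneg (by simpa using Real.exp_le_exp.2 h : (0:ℝ) ≤ _),
      abs_of_nonneg (by linarith), max_eq_right h]
    exact key y x h

/-- Closed/antiderivative form of the half-line integral. -/
noncomputable def Phi (t : ℝ) : ℝ := ∫ x in (0:ℝ)..t, phi x

lemma hasDerivAt_Phi (t : ℝ) : HasDerivAt Phi (phi t) t :=
  (continuous_phi.integral_hasStrictDerivAt 0 t).hasDerivAt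

lemma contDiff_Phi : ContDiff ℝ (⊤ : ℕ∞) Phi := by
  rw [show ((⊤ : ℕ∞) : WithTop ℕ∞) = (⊤ : ℕ∞) from rfl, contDiff_infty_iff_deriv]
  refine ⟨fun t => (hasDerivAt_Phi t).differentiableAt, ?_⟩
  have : deriv Phi = phi := funext fun t => (hasDerivAt_Phi t).deriv
  rw [this]
  exact contDiff_phi

lemma hasDerivAt_G (v u₀ : ℝ) :
    HasDerivAt (fun u => ∫ s in Ioi (0:ℝ),
      Real.exp (-s ^ 2 / 2) / s * (Real.exp (s * u) - Real.exp (s * v))) (phi u₀) u₀ := by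
  have hmeas : ∀ x : ℝ, AEStronglyMeasurable
      (fun s : ℝ => Real.exp (-s ^ 2 / 2) / s * (Real.exp (s * x) - Real.exp (s * v)))
      (volume.restrict (Ioi 0)) := by
    intro x
    apply Measurable.aestronglyMeasurable
    fun_prop
  have hbound_pt : ∀ (u : ℝ), ∀ s ∈ Ioi (0:ℝ),
      ‖Real.exp (-s ^ 2 / 2) / s * (Real.exp (s * u) - Real.exp (s * v))‖
        ≤ |u - v| * Real.exp (-s ^ 2 / 2 + s * (|u| + |v|)) := by
    intro u s hs
    have hs0 : (0:ℝ) < s := hs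
    have h1 : |Real.exp (s * u) - Real.exp (s * v)|
        ≤ s * |u - v| * Real.exp (s * (|u| + |v|)) := by
      have h2 := abs_exp_sub_exp (s * u) (s * v)
      have h3 : |s * u - s * v| = s * |u - v| := by
        rw [← mul_sub, abs_mul, abs_of_pos hs0]
      have h4 : Real.exp (max (s * u) (s * v)) ≤ Real.exp (s * (|u| + |v|)) := by
        apply Real.exp_le_exp.2
        apply max_le
        · nlinarith [le_abs_self u, abs_nonneg v, hs0.le]
        · nlinarith [le_abs_self v, abs_nonneg u, hs0.le]
      calc |Real.exp (s * u) - Real.exp (s * v)|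
          ≤ |s * u - s * v| * Real.exp (max (s * u) (s * v)) := h2
        _ ≤ s * |u - v| * Real.exp (s * (|u| + |v|)) := by
            rw [h3]
            exact mul_le_mul_of_nonneg_left h4 (by positivity)
    have hge : (0:ℝ) ≤ Real.exp (-s ^ 2 / 2) / s := by positivity
    rw [norm_mul, Real.norm_eq_abs, Real.norm_eq_abs, abs_of_nonneg hge]
    calc Real.exp (-s ^ 2 / 2) / s * |Real.exp (s * u) - Real.exp (s * v)|
        ≤ Real.exp (-s ^ 2 / 2) / s * (s * |u - v| * Real.exp (s * (|u| + |v|))) :=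
          mul_le_mul_of_nonneg_left h1 hge
      _ = |u - v| * (Real.exp (-s ^ 2 / 2) * Real.exp (s * (|u| + |v|))) := by
          field_simp
      _ = |u - v| * Real.exp (-s ^ 2 / 2 + s * (|u| + |v|)) := by rw [← Real.exp_add]
  have key := hasDerivAt_integral_of_dominated_loc_of_deriv_le
    (F := fun u s => Real.exp (-s ^ 2 / 2) / s * (Real.exp (s * u) - Real.exp (s * v)))
    (F' := fun u s => Real.exp (-s ^ 2 / 2 + s * u))
    (bound := fun s => Real.exp (-s ^ 2 / 2 + s * (|u₀| + 1)))
    (μ := volume.restrict (Ioi 0)) (x₀ := u₀) (Metric.ball_mem_nhds u₀ one_pos)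
    (Filter.Eventually.of_forall hmeas)
    (by
      apply Integrable.mono'
        (g := fun s => |u₀ - v| * Real.exp (-s ^ 2 / 2 + s * (|u₀| + |v|)))
        ((integrable_shift (|u₀| + |v|)).const_mul _) (hmeas u₀)
      rw [ae_restrict_iff' measurableSet_Ioi]
      exact Filter.Eventually.of_forall fun s hs => hbound_pt u₀ s hs)
    (by apply Measurable.aestronglyMeasurable; fun_prop)
    (by
      rw [ae_restrict_iff' measurableSet_Ioi]
      apply Filter.Eventually.of_forall
      intro s hs x hx
      have hs0 : (0:ℝ) < s := hs
      rw [Real.norm_eq_abs, abs_of_pos (Real.exp_pos _)]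
      apply Real.exp_le_exp.2
      have hx1 : x ≤ |u₀| + 1 := by
        have := abs_sub_abs_le_abs_sub x u₀
        have hb : |x - u₀| < 1 := by simpa [Real.dist_eq] using Metric.mem_ball.1 hx
        have := le_abs_self x
        linarith [abs_sub_abs_le_abs_sub x u₀, hb.le, le_abs_self x]
      nlinarith
      )
    (integrable_shift (|u₀| + 1))
    (by
      rw [ae_restrict_iff' measurableSet_Ioi]
      apply Filter.Eventually.of_forall
      intro s hs x hx
      have hs0 : (0:ℝ) < s := hs
      have h1 : HasDerivAt (fun x : ℝ => s * x) s x := by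
        simpa using (hasDerivAt_id x).const_mul s
      have h2 := h1.exp
      have h3 := (h2.sub_const (Real.exp (s * v))).const_mul (Real.exp (-s ^ 2 / 2) / s)
      have heq : Real.exp (-s ^ 2 / 2) / s * (Real.exp (s * x) * s)
          = Real.exp (-s ^ 2 / 2 + s * x) := by
        rw [Real.exp_add]; field_simp
      rw [heq] at h3
      exact h3)
  rw [phi_eq u₀] at key
  exact key.2

/-- The central identity: the half-line integral in closed form. -/
lemma key_identity (u v : ℝ) :
    ∫ s in Ioi (0:ℝ),
      Real.exp (-s ^ 2 / 2) / s * (Real.exp (s * u) - Real.exp (s * v))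
      = Phi u - Phi v := by
  set G : ℝ → ℝ := fun u => ∫ s in Ioi (0:ℝ),
    Real.exp (-s ^ 2 / 2) / s * (Real.exp (s * u) - Real.exp (s * v)) with hG
  have hD : ∀ x, HasDerivAt (fun u => G u - Phi u) 0 x := by
    intro x
    have := (hasDerivAt_G v x).sub (hasDerivAt_Phi x); rw [sub_self] at this; exact this
  have hconst : G u - Phi u = G v - Phi v :=
    is_const_of_deriv_eq_zero
      (fun x => (hD x).differentiableAt)
      (fun x => (hD x).deriv) u v
  have hGv : G v = 0 := by
    simp [hG]
  have : G u - Phi u = -Phi v := by rw [hconst, hGv]; ring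
  linarith [this]

lemma contDiff_PhiComp (c d e f : ℝ) :
    ContDiff ℝ (⊤ : ℕ∞) fun p : ℝ × ℝ => Phi ((c - (d * p.1 - e * p.2)) / f) := by
  apply contDiff_Phi.comp
  apply ContDiff.div_const
  exact contDiff_const.sub ((contDiff_const.mul contDiff_fst).sub
    (contDiff_const.mul contDiff_snd))


lemma contDiff_PhiComp2 (c d e k f : ℝ) :
    ContDiff ℝ (⊤ : ℕ∞) fun p : ℝ × ℝ => Phi ((c - (d * p.1 - e * p.2 + k)) / f) := by
  apply contDiff_Phi.comp
  apply ContDiff.div_const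
  exact contDiff_const.sub (((contDiff_const.mul contDiff_fst).sub
    (contDiff_const.mul contDiff_snd)).add contDiff_const)

end SmoothAux

/-- `I1` and `I2` are `C^∞` functions of `(N_E, N_I) ∈ ℝ²`. -/
theorem I1_I2_smooth (VR VF aE aI bEE bIE bEI bII νext : ℝ)
    (hV : VR < VF) (haE : 0 < aE) (haI : 0 < aI)
    (hEE : 0 ≤ bEE) (hIE : 0 ≤ bIE) (hEI : 0 ≤ bEI) (hII : 0 ≤ bII) (hν : 0 ≤ νext) :
    ContDiff ℝ (⊤ : ℕ∞) (fun p : ℝ × ℝ => I1 VR VF aE bEE bIE p.1 p.2) ∧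
    ContDiff ℝ (⊤ : ℕ∞) (fun p : ℝ × ℝ => I2 VR VF aI bEE bEI bII νext p.1 p.2) := by
  constructor
  · have h1 : (fun p : ℝ × ℝ => I1 VR VF aE bEE bIE p.1 p.2)
        = fun p : ℝ × ℝ =>
          SmoothAux.Phi ((VF - (bEE * p.1 - bIE * p.2)) / Real.sqrt aE)
          - SmoothAux.Phi ((VR - (bEE * p.1 - bIE * p.2)) / Real.sqrt aE) := by
      funext p
      exact SmoothAux.key_identity _ _
    rw [h1]
    exact (SmoothAux.contDiff_PhiComp _ _ _ _).sub (SmoothAux.contDiff_PhiComp _ _ _ _)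
  · have h2 : (fun p : ℝ × ℝ => I2 VR VF aI bEE bEI bII νext p.1 p.2)
        = fun p : ℝ × ℝ =>
          SmoothAux.Phi ((VF - (bEI * p.1 - bII * p.2 + (bEI - bEE) * νext)) / Real.sqrt aI)
          - SmoothAux.Phi ((VR - (bEI * p.1 - bII * p.2 + (bEI - bEE) * νext)) / Real.sqrt aI) := by
      funext p
      exact SmoothAux.key_identity _ _
    rw [h2]
    exact (SmoothAux.contDiff_PhiComp2 _ _ _ _ _).sub (SmoothAux.contDiff_PhiComp2 _ _ _ _ _)
end
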